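/- arXiv:2211.06072 — 5 statements merged into one kernel-verified Lean document; each statement's English description precedes it below -/
import Mathlib

section
/- An orientation O of the k-dimensional hypercube is a unique sink orientation if and only if for every pair of distinct vertices v, w there exists a coordinate i with v_i ≠ w_i and O(v)_i = O(w)_i. -/
/-! Write `s v = O v ⊕ v` for the outmap, so that the sinks of the whole cube are the zeros of `s`.
The Szabó–Welzl condition makes `s` injective, hence bijective, so the cube has exactly one sink;
and the condition passes to every face `f`, which becomes a whole cube once the edges in the fixed
directions of `f` are directed towards `f`.

Conversely, a face that is free in direction `j` splits into two halves, and it has a unique sink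
exactly when the `j`-edges at the sinks of the two halves point the same way. Reversing all
`j`-edges preserves this, so it keeps the unique sink property. If `v ≠ w` violated the condition,
reversing every direction in which `v` is not a sink would make both `v` and `w` sinks of the face
they span. -/

/-- The neighbor of `v` across the `i`-edge. -/
def flipV {k : ℕ} (v : Fin k → Bool) (i : Fin k) : Fin k → Bool :=
  Function.update v i (!(v i))

/-- `v` belongs to the face described by `f ∈ {0,1,*}^k` (`none` = `*`). -/
def inFace {k : ℕ} (f : Fin k → Option Bool) (v : Fin k → Bool) : Prop :=
  ∀ i : Fin k, ∀ b : Bool, f i = some b → v i = b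

/-- `v` is a sink of the face `f` under the orientation `O`:
all edges of the face incident to `v` are directed toward `v`.
(`O v i = v i` means the `i`-edge at `v` is incoming.) -/
def isSinkOf {k : ℕ} (O : (Fin k → Bool) → (Fin k → Bool))
    (f : Fin k → Option Bool) (v : Fin k → Bool) : Prop :=
  inFace f v ∧ ∀ i : Fin k, f i = none → O v i = v i

variable {k : ℕ} {O O' : (Fin k → Bool) → Fin k → Bool} {f : Fin k → Option Bool}
  {v : Fin k → Bool} {j : Fin k}

def IsUSO (O : (Fin k → Bool) → Fin k → Bool) : Prop :=
  ∀ f : Fin k → Option Bool, ∃! v : Fin k → Bool, isSinkOf O f v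

def SzaboWelzl (O : (Fin k → Bool) → Fin k → Bool) : Prop :=
  ∀ v w : Fin k → Bool, v ≠ w → ∃ i : Fin k, v i ≠ w i ∧ O v i = O w i

lemma isSinkOf_congr (h : ∀ x i, f i = none → O x i = O' x i) :
    isSinkOf O f v ↔ isSinkOf O' f v :=
  and_congr_right fun _ => forall_congr' fun i => imp_congr_right fun hi => by rw [h v i hi]

lemma apply_eq_of_isSinkOf_update {b : Bool}
    (hv : isSinkOf O (Function.update f j (some b)) v) : v j = b :=
  hv.1 j b (by simp)

lemma isSinkOf_iff_update (hj : f j = none) :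
    isSinkOf O f v ↔ isSinkOf O (Function.update f j (some (v j))) v ∧ O v j = v j := by
  constructor
  · rintro ⟨hface, hsink⟩
    refine ⟨⟨fun i b hib => ?_, fun i hi => hsink i ?_⟩, hsink j hj⟩
    · rcases eq_or_ne i j with rfl | hij
      · simpa using hib
      · exact hface i b (by simpa [hij] using hib)
    · rcases eq_or_ne i j with rfl | hij
      · simp at hi
      · simpa [hij] using hi
  · rintro ⟨⟨hface, hsink⟩, hvj⟩
    refine ⟨fun i b hib => hface i b ?_, fun i hi => ?_⟩
    · rcases eq_or_ne i j with rfl | hij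
      · simp [hj] at hib
      · simpa [hij] using hib
    · rcases eq_or_ne i j with rfl | hij
      · exact hvj
      · exact hsink i (by simpa [hij] using hi)

lemma isSinkOf_iff_of_halves {u : Bool → Fin k → Bool}
    (hu : ∀ b x, isSinkOf O (Function.update f j (some b)) x ↔ u b = x) (hj : f j = none) :
    isSinkOf O f v ↔ ∃ b, u b = v ∧ O v j = b := by
  rw [isSinkOf_iff_update hj, hu]
  constructor
  · rintro ⟨huv, hv⟩
    exact ⟨v j, huv, hv⟩
  · rintro ⟨b, rfl, hb⟩
    rw [apply_eq_of_isSinkOf_update ((hu b (u b)).2 rfl)]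
    exact ⟨rfl, hb⟩

lemma existsUnique_isSinkOf_iff_of_halves {u : Bool → Fin k → Bool}
    (hu : ∀ b x, isSinkOf O (Function.update f j (some b)) x ↔ u b = x) (hj : f j = none) :
    (∃! v, isSinkOf O f v) ↔ O (u false) j = O (u true) j := by
  have hu_j (b : Bool) : u b j = b := apply_eq_of_isSinkOf_update ((hu b (u b)).2 rfl)
  have hne : u false ≠ u true := fun h => by simpa [hu_j] using congrFun h j
  simp only [isSinkOf_iff_of_halves hu hj]
  cases h0 : O (u false) j <;> cases h1 : O (u true) j
  · exact iff_of_true ⟨u false, ⟨false, rfl, h0⟩, by rintro _ ⟨_ | _, rfl, hb⟩ <;> simp_all⟩ rfl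
  · refine iff_of_false ?_ (by simp)
    rintro ⟨_, -, huniq⟩
    exact hne ((huniq _ ⟨false, rfl, h0⟩).trans (huniq _ ⟨true, rfl, h1⟩).symm)
  · refine iff_of_false ?_ (by simp)
    rintro ⟨_, ⟨_ | _, rfl, hb⟩, -⟩ <;> simp_all
  · exact iff_of_true ⟨u true, ⟨true, rfl, h1⟩, by rintro _ ⟨_ | _, rfl, hb⟩ <;> simp_all⟩ rfl

lemma IsUSO.of_xor_dir (hU : IsUSO O) (j : Fin k) (c : Bool)
    (hoff : ∀ x i, i ≠ j → O' x i = O x i) (hj : ∀ x, O' x j = xor (O x j) c) : IsUSO O' := by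
  intro f
  cases hfj : f j with
  | some b =>
    refine (existsUnique_congr fun v => isSinkOf_congr fun x i hi => ?_).1 (hU f)
    exact (hoff x i (by rintro rfl; simp [hfj] at hi)).symm
  | none =>
    let u b := (hU (Function.update f j (some b))).choose
    have hu (b : Bool) (x : Fin k → Bool) :
        isSinkOf O (Function.update f j (some b)) x ↔ u b = x :=
      ((hU _).choose_eq_iff).symm
    have hu' (b : Bool) (x : Fin k → Bool) :
        isSinkOf O' (Function.update f j (some b)) x ↔ u b = x := by
      refine Iff.trans (isSinkOf_congr fun x i hi => hoff x i ?_) (hu b x)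
      rintro rfl
      simp at hi
    have hagree := (existsUnique_isSinkOf_iff_of_halves hu hfj).1 (hU f)
    rw [existsUnique_isSinkOf_iff_of_halves hu' hfj, hj, hj, hagree]

theorem IsUSO.xor_const (hU : IsUSO O) (m : Fin k → Bool) :
    IsUSO fun x i => xor (O x i) (m i) := by
  classical
  have key (s : Finset (Fin k)) : IsUSO fun x i => if i ∈ s then xor (O x i) (m i) else O x i := by
    induction s using Finset.induction_on with
    | empty => simpa using hU
    | insert j s hjs ih =>
      exact ih.of_xor_dir j (m j) (fun x i hij => by simp [hij]) (fun x => by simp [hjs])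
  simpa using key Finset.univ

theorem IsUSO.szaboWelzl (hU : IsUSO O) : SzaboWelzl O := by
  intro v w hvw
  by_contra! hc
  let O' x i := xor (O x i) (xor (O v i) (v i))
  let f i := if v i = w i then some (v i) else none
  have hv : isSinkOf O' f v := by
    refine ⟨fun i b hi => ?_, fun i _ => by simp [O']⟩
    by_cases h : v i = w i <;> simp_all [f]
  have hw : isSinkOf O' f w := by
    refine ⟨fun i b hi => ?_, fun i hi => ?_⟩
    · by_cases h : v i = w i <;> simp_all [f]
    · have hvw_i : v i ≠ w i := by intro h; simp [f, h] at hi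
      have hO := hc i hvw_i
      simp only [O']
      revert hvw_i hO
      cases O v i <;> cases O w i <;> cases v i <;> cases w i <;> simp
  exact hvw ((hU.xor_const _ f).unique hv hw)

def projFace (f : Fin k → Option Bool) (v : Fin k → Bool) : Fin k → Bool :=
  fun i => (f i).getD (v i)

/-- Agrees with `O` on the face `f` and directs every edge in a fixed direction of `f` towards `f`,
so that its sinks in the whole cube are the sinks of `O` in `f`. -/
def restrictFace (O : (Fin k → Bool) → Fin k → Bool) (f : Fin k → Option Bool) :
    (Fin k → Bool) → Fin k → Bool :=
  fun v i => (f i).getD (O (projFace f v) i)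

lemma projFace_of_inFace (hv : inFace f v) : projFace f v = v := by
  funext i
  cases hfi : f i with
  | none => simp [projFace, hfi]
  | some b => simp [projFace, hfi, hv i b hfi]

lemma isSinkOf_iff_restrictFace_eq : isSinkOf O f v ↔ restrictFace O f v = v := by
  constructor
  · rintro ⟨hface, hsink⟩
    funext i
    cases hfi : f i with
    | none => simp [restrictFace, hfi, projFace_of_inFace hface, hsink]
    | some b => simp [restrictFace, hfi, hface i b hfi]
  · intro h
    have hface : inFace f v := fun i b hfi => by
      simpa [restrictFace, hfi] using (congrFun h i).symm
    refine ⟨hface, fun i hfi => ?_⟩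
    simpa [restrictFace, hfi, projFace_of_inFace hface] using congrFun h i

lemma SzaboWelzl.restrictFace (hSW : SzaboWelzl O) (f : Fin k → Option Bool) :
    SzaboWelzl (restrictFace O f) := by
  intro v w hvw
  by_cases hproj : projFace f v = projFace f w
  · obtain ⟨i, hi⟩ := Function.ne_iff.1 hvw
    cases hfi : f i with
    | none => exact absurd (by simpa [projFace, hfi] using congrFun hproj i) hi
    | some b => exact ⟨i, hi, by simp [_root_.restrictFace, hfi]⟩
  · obtain ⟨i, hi, hO⟩ := hSW _ _ hproj
    cases hfi : f i with
    | none =>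
      exact ⟨i, by simpa [projFace, hfi] using hi, by simpa [_root_.restrictFace, hfi] using hO⟩
    | some b => simp [projFace, hfi] at hi

lemma SzaboWelzl.existsUnique_fixedPoint (hSW : SzaboWelzl O) : ∃! v, O v = v := by
  have hinj : Function.Injective fun v i => xor (O v i) (v i) := by
    intro v w h
    by_contra hvw
    obtain ⟨i, hi, hO⟩ := hSW v w hvw
    exact hi (by simpa [hO] using congrFun h i)
  refine (existsUnique_congr fun v => ?_).1
    ((Finite.injective_iff_bijective.1 hinj).existsUnique fun _ => false)
  simp [funext_iff]

theorem SzaboWelzl.isUSO (hSW : SzaboWelzl O) : IsUSO O := fun f =>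
  (existsUnique_congr fun _ => isSinkOf_iff_restrictFace_eq).2
    (hSW.restrictFace f).existsUnique_fixedPoint

theorem stmt0_general (k : ℕ) (O : (Fin k → Bool) → (Fin k → Bool)) :
    (∀ f : Fin k → Option Bool, ∃! v : Fin k → Bool, isSinkOf O f v) ↔
      (∀ v w : Fin k → Bool, v ≠ w → ∃ i : Fin k, v i ≠ w i ∧ O v i = O w i) :=
  ⟨IsUSO.szaboWelzl, SzaboWelzl.isUSO⟩

/-- An orientation of the `k`-cube is a USO (every non-empty face has a unique sink)
iff the Szabó–Welzl condition holds. -/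
theorem stmt0 (k : ℕ) (O : (Fin k → Bool) → (Fin k → Bool))
    (hO : ∀ (v : Fin k → Bool) (i : Fin k), O v i = O (flipV v i) i) :
    (∀ f : Fin k → Option Bool, ∃! v : Fin k → Bool, isSinkOf O f v) ↔
      (∀ v w : Fin k → Bool, v ≠ w → ∃ i : Fin k, v i ≠ w i ∧ O v i = O w i) :=
  stmt0_general k O
end

section
/- Let K ⊆ {0,1,2,3}^k represent a k-dimensional USO, and let (S^(0), S^(1), S^(2), S^(3)) be a simple rewriting rule with target dimension d. Then for any h ∈ [k], the set S_h(K) ⊆ {0,1,2,3}^{k+d-1} obtained by replacing, in each string v ∈ K, the entry v_h by each string of S^(v_h), represents a (k+d-1)-dimensional USO. -/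
/-- Strings `v` and `w` differ by exactly 2 in coordinate `i`. -/
def Diff2At (v w : List (Fin 4)) (i : ℕ) : Prop :=
  (v.getD i 0 : ℕ) = (w.getD i 0 : ℕ) + 2 ∨ (w.getD i 0 : ℕ) = (v.getD i 0 : ℕ) + 2

/-- A set of strings in `{0,1,2,3}^n` represents an `n`-dimensional USO
(a `4ℤ^n`-periodic cube tiling): all strings have length `n`, there are `2^n`
of them, and any two distinct ones differ by exactly 2 in some coordinate. -/
def IsUSOSet (n : ℕ) (K : Finset (List (Fin 4))) : Prop :=
  (∀ v ∈ K, v.length = n) ∧ K.card = 2 ^ n ∧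
    ∀ v ∈ K, ∀ w ∈ K, v ≠ w → ∃ i : ℕ, i < n ∧ Diff2At v w i

/-- Replace the entry of `v` at (0-indexed) position `h` by the string `s`. -/
def splice (v : List (Fin 4)) (h : ℕ) (s : List (Fin 4)) : List (Fin 4) :=
  v.take h ++ s ++ v.drop (h + 1)

/-- A simple rewriting rule `(S⁽⁰⁾, S⁽¹⁾, S⁽²⁾, S⁽³⁾)` with target dimension `d`. -/
def IsSimpleRule (d : ℕ) (S : Fin 4 → Finset (List (Fin 4))) : Prop :=
  Disjoint (S 0) (S 2) ∧ IsUSOSet d (S 0 ∪ S 2) ∧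
    Disjoint (S 1) (S 3) ∧ IsUSOSet d (S 1 ∪ S 3)

/-- Applying a simple rewriting rule at (0-indexed) dimension `h`:
`S_h(K) = ⋃_{v ∈ K} { v₁…v_{h-1} s v_{h+1}…v_k : s ∈ S^(v_h) }`. -/
def rewriteSet (S : Fin 4 → Finset (List (Fin 4))) (h : ℕ)
    (K : Finset (List (Fin 4))) : Finset (List (Fin 4)) :=
  K.biUnion fun v => (S (v.getD h 0)).image (splice v h)

/-!
Read modulo 4, the condition on `K` says exactly that the unit cubes `v + {0,1}^k`, `v ∈ K`, are
pairwise disjoint; having `2^k` of them, they tile the torus `(ℤ/4)^k`. Sending `v` to the tile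
containing `v + 2eₕ` then shows that `K` has as many strings with `vₕ = c` as with `vₕ = c + 2`.

Two distinct strings of `S_h(K)` differ by 2 in a coordinate outside the block `h, …, h+d-1` if
their parents in `K` do so off `h`; otherwise their parents agree off `h`, with `h`-entries equal
or differing by 2, and the inserted words are distinct (as `S^(c) ∩ S^(c+2) = ∅`) and lie in one
of the USOs `S⁽⁰⁾ ∪ S⁽²⁾`, `S⁽¹⁾ ∪ S⁽³⁾`, so they differ by 2 inside the block. This also makes
the union defining `S_h(K)` disjoint, so
`2 |S_h(K)| = ∑_{v ∈ K} (|S^(vₕ)| + |S^(vₕ+2)|) = 2^k 2^d`.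
-/

open Finset

section Tiling

variable {ι : Type*} {K : Finset (ι → Fin 4)}

lemma eq_of_forall_ne_add_two (hsep : ∀ f ∈ K, ∀ g ∈ K, f ≠ g → ∃ i, f i = g i + 2)
    {f g : ι → Fin 4} (hf : f ∈ K) (hg : g ∈ K) (hfg : ∀ i, f i ≠ g i + 2) : f = g := by
  by_contra hne
  obtain ⟨i, hi⟩ := hsep f hf g hg hne
  exact hfg i hi

variable [Fintype ι] [DecidableEq ι]

def unitCube (f : ι → Fin 4) : Finset (ι → Fin 4) :=
  Fintype.piFinset fun i => {f i, f i + 1}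

lemma mem_unitCube {f p : ι → Fin 4} : p ∈ unitCube f ↔ ∀ i, p i = f i ∨ p i = f i + 1 := by
  simp [unitCube]

lemma card_unitCube (f : ι → Fin 4) : #(unitCube f) = 2 ^ Fintype.card ι := by
  have hpair : ∀ a : Fin 4, #({a, a + 1} : Finset (Fin 4)) = 2 := by decide
  simp [unitCube, hpair]

lemma ne_add_two_of_mem_unitCube {f g p : ι → Fin 4} (hf : p ∈ unitCube f)
    (hg : p ∈ unitCube g) (i : ι) : f i ≠ g i + 2 := by
  have key : ∀ a b c : Fin 4, (a = b ∨ a = b + 1) → (a = c ∨ a = c + 1) → b ≠ c + 2 := by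
    decide
  exact key _ _ _ (mem_unitCube.mp hf i) (mem_unitCube.mp hg i)

variable (hsep : ∀ f ∈ K, ∀ g ∈ K, f ≠ g → ∃ i, f i = g i + 2)
  (hcard : #K = 2 ^ Fintype.card ι)
include hsep hcard

lemma exists_mem_unitCube (p : ι → Fin 4) : ∃ g ∈ K, p ∈ unitCube g := by
  have hdisj : (K : Set (ι → Fin 4)).PairwiseDisjoint unitCube := by
    intro f hf g hg hne
    refine Finset.disjoint_left.mpr fun q hqf hqg => hne ?_
    exact eq_of_forall_ne_add_two hsep hf hg (ne_add_two_of_mem_unitCube hqf hqg)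
  have hcover : K.biUnion unitCube = univ := by
    apply eq_univ_of_card
    rw [card_biUnion hdisj, sum_congr rfl fun f _ => card_unitCube f, sum_const, hcard,
      smul_eq_mul, ← mul_pow, Fintype.card_fun, Fintype.card_fin]
    rfl
  simpa [hcover] using mem_biUnion.mp (hcover ▸ mem_univ p)

lemma card_filter_apply_le_add_two (h : ι) (c : Fin 4) :
    #{f ∈ K | f h = c} ≤ #{f ∈ K | f h = c + 2} := by
  have hnear : ∀ a b e : Fin 4, (a = e ∨ a = e + 1) → (b = e ∨ b = e + 1) → a ≠ b + 2 := by
    decide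
  choose F hFK hF using fun f : ι → Fin 4 =>
    exists_mem_unitCube hsep hcard (Function.update f h (f h + 2))
  have hFi : ∀ f i, i ≠ h → f i = F f i ∨ f i = F f i + 1 := fun f i hi => by
    simpa [Function.update_of_ne hi] using mem_unitCube.mp (hF f) i
  have hFh : ∀ f ∈ K, F f h = f h + 2 := by
    intro f hf
    by_contra hne
    have hfF : f = F f := by
      refine eq_of_forall_ne_add_two hsep hf (hFK f) fun i => ?_
      rcases eq_or_ne i h with rfl | hi
      · have hsymm : ∀ a b : Fin 4, b ≠ a + 2 → a ≠ b + 2 := by decide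
        exact hsymm _ _ hne
      · exact hnear _ _ _ (hFi f i hi) (Or.inl rfl)
    have hmiss : ∀ a : Fin 4, ¬(a + 2 = a ∨ a + 2 = a + 1) := by decide
    have hfh := mem_unitCube.mp (hF f) h
    rw [Function.update_self, ← hfF] at hfh
    exact hmiss _ hfh
  refine card_le_card_of_injOn F (fun f hf => ?_) fun f hf g hg hfg => ?_
  · simp only [coe_filter] at hf ⊢
    exact ⟨hFK f, by rw [hFh f hf.1, hf.2]⟩
  · simp only [coe_filter] at hf hg
    refine eq_of_forall_ne_add_two hsep hf.1 hg.1 fun i => ?_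
    rcases eq_or_ne i h with rfl | hi
    · rw [hf.2, hg.2]
      exact hnear _ _ _ (Or.inl rfl) (Or.inl rfl)
    · exact hnear _ _ _ (hFi f i hi) (hfg ▸ hFi g i hi)

lemma card_filter_apply_add_two (h : ι) (c : Fin 4) :
    #{f ∈ K | f h = c + 2} = #{f ∈ K | f h = c} := by
  refine le_antisymm ?_ (card_filter_apply_le_add_two hsep hcard h c)
  simpa [add_assoc] using card_filter_apply_le_add_two hsep hcard h (c + 2)

end Tiling

lemma diff2At_iff {v w : List (Fin 4)} {i : ℕ} : Diff2At v w i ↔ v.getD i 0 = w.getD i 0 + 2 := by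
  have key : ∀ a b : Fin 4, ((a : ℕ) = b + 2 ∨ (b : ℕ) = a + 2) ↔ a = b + 2 := by decide
  exact key _ _

lemma not_diff2At_self (v : List (Fin 4)) (i : ℕ) : ¬Diff2At v v i := by
  simp [Diff2At]

namespace IsUSOSet

variable {n h : ℕ} {K : Finset (List (Fin 4))}

lemma card_filter_getD_add_two (hK : IsUSOSet n K) (hh : h < n) (c : Fin 4) :
    #{v ∈ K | v.getD h 0 = c + 2} = #{v ∈ K | v.getD h 0 = c} := by
  let x : List (Fin 4) → Fin n → Fin 4 := fun v i => v.getD i 0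
  have hsep : ∀ v ∈ K, ∀ w ∈ K, v ≠ w → ∃ i, x v i = x w i + 2 := fun v hv w hw hne => by
    obtain ⟨i, hi, hd⟩ := hK.2.2 v hv w hw hne
    exact ⟨⟨i, hi⟩, diff2At_iff.mp hd⟩
  have hinj : Set.InjOn x K := fun v hv w hw hvw => by
    by_contra hne
    obtain ⟨i, hi⟩ := hsep v hv w hw hne
    have hself : ∀ a : Fin 4, a ≠ a + 2 := by decide
    exact hself _ (hvw ▸ hi)
  have hlayer : ∀ c, #{v ∈ K | v.getD h 0 = c} = #{f ∈ K.image x | f ⟨h, hh⟩ = c} := by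
    intro c
    rw [filter_image, card_image_of_injOn (hinj.mono (filter_subset _ _))]
  rw [hlayer, hlayer]
  refine card_filter_apply_add_two ?_ ?_ _ c
  · simp only [mem_image]
    rintro _ ⟨v, hv, rfl⟩ _ ⟨w, hw, rfl⟩ hne
    exact hsep v hv w hw fun hvw => hne (hvw ▸ rfl)
  · rw [card_image_of_injOn hinj, hK.2.1, Fintype.card_fin]

lemma sum_comp_getD_add_two {M : Type*} [AddCommMonoid M] (hK : IsUSOSet n K) (hh : h < n)
    (φ : Fin 4 → M) : ∑ v ∈ K, φ (v.getD h 0 + 2) = ∑ v ∈ K, φ (v.getD h 0) := by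
  rw [← sum_fiberwise' K (fun v => v.getD h 0) (fun c => φ (c + 2)),
    ← sum_fiberwise' K (fun v => v.getD h 0) φ]
  refine Fintype.sum_equiv (Equiv.addRight 2) _ _ fun c => ?_
  simp only [sum_const]
  exact congrArg (· • φ (c + 2)) (hK.card_filter_getD_add_two hh c).symm

end IsUSOSet

namespace IsSimpleRule

variable {d : ℕ} {S : Fin 4 → Finset (List (Fin 4))}

lemma disjoint_add_two (hS : IsSimpleRule d S) (c : Fin 4) : Disjoint (S c) (S (c + 2)) := by
  obtain ⟨h02, -, h13, -⟩ := hS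
  fin_cases c
  exacts [h02, h13, h02.symm, h13.symm]

lemma isUSOSet_union_add_two (hS : IsSimpleRule d S) (c : Fin 4) :
    IsUSOSet d (S c ∪ S (c + 2)) := by
  obtain ⟨-, h02, -, h13⟩ := hS
  fin_cases c
  exacts [h02, h13, union_comm (S 0) (S 2) ▸ h02, union_comm (S 1) (S 3) ▸ h13]

lemma length_eq (hS : IsSimpleRule d S) {c : Fin 4} {s : List (Fin 4)} (hs : s ∈ S c) :
    s.length = d :=
  (hS.isUSOSet_union_add_two c).1 s (mem_union_left _ hs)

lemma card_add_card_add_two (hS : IsSimpleRule d S) (c : Fin 4) :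
    #(S c) + #(S (c + 2)) = 2 ^ d := by
  rw [← card_union_of_disjoint (hS.disjoint_add_two c), (hS.isUSOSet_union_add_two c).2.1]

end IsSimpleRule

section Splice

variable {v s : List (Fin 4)} {h j : ℕ}

lemma length_splice (hh : h < v.length) : (splice v h s).length = v.length + s.length - 1 := by
  simp only [splice, List.length_append, List.length_take, List.length_drop]
  omega

lemma getD_splice_of_lt (hh : h ≤ v.length) (hj : j < h) :
    (splice v h s).getD j 0 = v.getD j 0 := by
  grind [splice]

lemma getD_splice_add (hh : h ≤ v.length) (hj : j < s.length) :
    (splice v h s).getD (h + j) 0 = s.getD j 0 := by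
  grind [splice]

lemma getD_splice_of_gt (hh : h ≤ v.length) (hj : h < j) :
    (splice v h s).getD (j + s.length - 1) 0 = v.getD j 0 := by
  grind [splice]

end Splice

section Rewrite

variable {k d h : ℕ} {K : Finset (List (Fin 4))} {S : Fin 4 → Finset (List (Fin 4))}

lemma rewriteSet_eq_image_sigma :
    rewriteSet S h K = (K.sigma fun v => S (v.getD h 0)).image fun p => splice p.1 h p.2 := by
  ext x
  simp only [rewriteSet, mem_biUnion, mem_image, mem_sigma, Sigma.exists, and_assoc,
    exists_and_left]

lemma exists_diff2At_splice (hK : IsUSOSet k K) (hS : IsSimpleRule d S) (hh : h < k)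
    {v w s t : List (Fin 4)} (hv : v ∈ K) (hw : w ∈ K) (hs : s ∈ S (v.getD h 0))
    (ht : t ∈ S (w.getD h 0)) (hne : v ≠ w ∨ s ≠ t) :
    ∃ i < k + d - 1, Diff2At (splice v h s) (splice w h t) i := by
  have hvl := hK.1 v hv
  have hwl := hK.1 w hw
  have hsl := hS.length_eq hs
  have htl := hS.length_eq ht
  have hmid : s ≠ t → v.getD h 0 = w.getD h 0 ∨ v.getD h 0 = w.getD h 0 + 2 →
      ∃ i < k + d - 1, Diff2At (splice v h s) (splice w h t) i := by
    intro hst hvw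
    have hsT : s ∈ S (w.getD h 0) ∪ S (w.getD h 0 + 2) := by
      rcases hvw with hvw | hvw
      · exact mem_union_left _ (hvw ▸ hs)
      · exact mem_union_right _ (hvw ▸ hs)
    obtain ⟨j, hj, hd⟩ :=
      (hS.isUSOSet_union_add_two _).2.2 s hsT t (mem_union_left _ ht) hst
    refine ⟨h + j, by omega, ?_⟩
    rwa [Diff2At, getD_splice_add (by omega) (by omega), getD_splice_add (by omega) (by omega)]
  rcases eq_or_ne v w with rfl | hvw
  · exact hmid (hne.resolve_left (not_not_intro rfl)) (Or.inl rfl)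
  obtain ⟨i, hi, hd⟩ := hK.2.2 v hv w hw hvw
  rcases lt_trichotomy i h with hlt | rfl | hgt
  · refine ⟨i, by omega, ?_⟩
    rwa [Diff2At, getD_splice_of_lt (by omega) hlt, getD_splice_of_lt (by omega) hlt]
  · have hvi := diff2At_iff.mp hd
    refine hmid (fun hst => ?_) (Or.inr hvi)
    exact disjoint_left.mp (hS.disjoint_add_two _) ht (hvi ▸ hst ▸ hs)
  · refine ⟨i + d - 1, by omega, ?_⟩
    rwa [Diff2At, ← hsl, getD_splice_of_gt (by omega) hgt, hsl, ← htl,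
      getD_splice_of_gt (by omega) hgt]

lemma sum_card_rule_getD_eq_pow (hK : IsUSOSet k K) (hS : IsSimpleRule d S) (hh : h < k) :
    ∑ v ∈ K, #(S (v.getD h 0)) = 2 ^ (k + d - 1) := by
  have htwice : 2 * ∑ v ∈ K, #(S (v.getD h 0)) = 2 ^ k * 2 ^ d := by
    calc 2 * ∑ v ∈ K, #(S (v.getD h 0))
        = ∑ v ∈ K, #(S (v.getD h 0)) + ∑ v ∈ K, #(S (v.getD h 0 + 2)) := by
          rw [two_mul, hK.sum_comp_getD_add_two hh fun c => #(S c)]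
      _ = ∑ v ∈ K, 2 ^ d := by
          rw [← sum_add_distrib]
          exact sum_congr rfl fun v _ => hS.card_add_card_add_two _
      _ = 2 ^ k * 2 ^ d := by rw [sum_const, hK.2.1, smul_eq_mul]
  have hk : 2 ^ k = 2 * 2 ^ (k - 1) := by rw [← pow_succ']; congr 1; omega
  rw [hk, mul_assoc, ← pow_add] at htwice
  rw [Nat.eq_of_mul_eq_mul_left two_pos htwice]
  congr 1
  omega

end Rewrite

theorem stmt3 (k d : ℕ) (K : Finset (List (Fin 4))) (hK : IsUSOSet k K)
    (S : Fin 4 → Finset (List (Fin 4))) (hS : IsSimpleRule d S)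
    (h : ℕ) (hh : h < k) :
    IsUSOSet (k + d - 1) (rewriteSet S h K) := by
  have hsep : ∀ p ∈ K.sigma (fun v => S (v.getD h 0)), ∀ q ∈ K.sigma (fun v => S (v.getD h 0)),
      p ≠ q → ∃ i < k + d - 1, Diff2At (splice p.1 h p.2) (splice q.1 h q.2) i := by
    rintro ⟨v, s⟩ hp ⟨w, t⟩ hq hne
    rw [mem_sigma] at hp hq
    refine exists_diff2At_splice hK hS hh hp.1 hq.1 hp.2 hq.2 ?_
    by_contra! hvwst
    obtain ⟨rfl, rfl⟩ := hvwst
    exact hne rfl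
  rw [rewriteSet_eq_image_sigma]
  refine ⟨?_, ?_, ?_⟩
  · simp only [mem_image, mem_sigma]
    rintro _ ⟨⟨v, s⟩, ⟨hv, hs⟩, rfl⟩
    rw [length_splice (hK.1 v hv ▸ hh), hK.1 v hv, hS.length_eq hs]
  · rw [card_image_of_injOn, card_sigma, sum_card_rule_getD_eq_pow hK hS hh]
    intro p hp q hq hpq
    by_contra hne
    obtain ⟨i, -, hi⟩ := hsep p hp q hq hne
    rw [show splice p.1 h p.2 = splice q.1 h q.2 from hpq] at hi
    exact not_diff2At_self _ i hi
  · simp only [mem_image]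
    rintro _ ⟨p, hp, rfl⟩ _ ⟨q, hq, rfl⟩ hne
    exact hsep p hp q hq fun hpq => hne (hpq ▸ rfl)
end

section
/- Applying a simple rewriting rule in which both S^(0) ∪ S^(2) and S^(1) ∪ S^(3) (as d-dimensional USOs) contain at least one flippable edge to a k-dimensional USO K containing at least one flippable edge yields a USO that also contains at least one flippable edge. -/
/-- `v` and `w` form a flippable edge: they differ in exactly one coordinate,
and there by exactly 2. -/
def FlipPair (v w : List (Fin 4)) : Prop :=
  ∃ j : ℕ, Diff2At v w j ∧ ∀ i : ℕ, i ≠ j → v.getD i 0 = w.getD i 0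

/-- The USO represented by `K` contains at least one flippable edge. -/
def HasFlippable (K : Finset (List (Fin 4))) : Prop :=
  ∃ v ∈ K, ∃ w ∈ K, v ≠ w ∧ FlipPair v w

/-! ### Auxiliary lemmas -/

lemma splice_getD (v s : List (Fin 4)) (h : ℕ) (hv : h < v.length) (i : ℕ) :
    (splice v h s).getD i 0 =
      if i < h then v.getD i 0
      else if i < h + s.length then s.getD (i - h) 0
      else v.getD (i + 1 - s.length) 0 := by
  have hth : (v.take h).length = h := by simp [List.length_take]; omega
  simp only [splice, List.getD_eq_getElem?_getD, List.getElem?_append, List.length_append,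
    hth, List.getElem?_take, List.getElem?_drop]
  by_cases h1 : i < h
  · have h2 : i < h + s.length := by omega
    simp [h1, h2]
  · by_cases h2 : i < h + s.length
    · simp [h1, h2]
    · simp only [if_neg h1, if_neg h2]
      have he : h + 1 + (i - (h + s.length)) = i + 1 - s.length := by omega
      rw [he]

lemma splice_length (v s : List (Fin 4)) (h : ℕ) (hv : h < v.length) :
    (splice v h s).length = v.length - 1 + s.length := by
  simp [splice]; omega

lemma diff2_irrefl (v : List (Fin 4)) (i : ℕ) : ¬ Diff2At v v i := by
  simp [Diff2At]

lemma ne_of_diff2 {x y : List (Fin 4)} {p : ℕ} (hd : Diff2At x y p) : x ≠ y := by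
  rintro rfl; exact diff2_irrefl x p hd

lemma diff2_lt {v w : List (Fin 4)} {i n : ℕ} (hv : v.length = n) (hw : w.length = n)
    (hd : Diff2At v w i) : i < n := by
  by_contra hc
  unfold Diff2At at hd
  rw [List.getD_eq_default _ _ (by omega), List.getD_eq_default _ _ (by omega)] at hd
  simp at hd

lemma mem_rewrite {S : Fin 4 → Finset (List (Fin 4))} {h : ℕ} {K : Finset (List (Fin 4))}
    {v s : List (Fin 4)} (hv : v ∈ K) (hs : s ∈ S (v.getD h 0)) :
    splice v h s ∈ rewriteSet S h K := by
  rw [rewriteSet, Finset.mem_biUnion]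
  exact ⟨v, hv, Finset.mem_image_of_mem _ hs⟩

/-- Flip pair from two bases agreeing off `h` and spliced strings flipping at `m`. -/
lemma flip_spliceA {b b' s t : List (Fin 4)} {h m : ℕ}
    (hb : h < b.length) (hb' : h < b'.length) (hlen : b.length = b'.length)
    (hst : s.length = t.length) (hm : m < s.length)
    (hbb : ∀ i, i ≠ h → b.getD i 0 = b'.getD i 0)
    (hd : Diff2At s t m) (hoff : ∀ i, i ≠ m → s.getD i 0 = t.getD i 0) :
    Diff2At (splice b h s) (splice b' h t) (h + m) ∧
      FlipPair (splice b h s) (splice b' h t) := by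
  have key1 : Diff2At (splice b h s) (splice b' h t) (h + m) := by
    unfold Diff2At
    rw [splice_getD b s h hb, splice_getD b' t h hb', ← hst]
    rw [if_neg (by omega : ¬ h + m < h), if_pos (by omega : h + m < h + s.length),
      if_neg (by omega : ¬ h + m < h), if_pos (by omega : h + m < h + s.length)]
    have : h + m - h = m := by omega
    rw [this]
    exact hd
  refine ⟨key1, h + m, key1, ?_⟩
  intro i hi
  rw [splice_getD b s h hb, splice_getD b' t h hb', ← hst]
  by_cases h1 : i < h
  · rw [if_pos h1, if_pos h1]
    exact hbb i (by omega)
  · by_cases h2 : i < h + s.length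
    · rw [if_neg h1, if_neg h1, if_pos h2, if_pos h2]
      exact hoff (i - h) (by omega)
    · rw [if_neg h1, if_neg h1, if_neg h2, if_neg h2]
      exact hbb (i + 1 - s.length) (by omega)

/-- Flip pair from two bases flipping at `j ≠ h`, spliced with the same string. -/
lemma flip_spliceB {b b' s : List (Fin 4)} {h j : ℕ}
    (hb : h < b.length) (hb' : h < b'.length) (hlen : b.length = b'.length)
    (hsd : 1 ≤ s.length) (hjh : j ≠ h) (hjlt : j < b.length)
    (hd : Diff2At b b' j) (hoff : ∀ i, i ≠ j → b.getD i 0 = b'.getD i 0) :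
    ∃ p, Diff2At (splice b h s) (splice b' h s) p ∧
      FlipPair (splice b h s) (splice b' h s) := by
  rcases lt_or_gt_of_ne hjh with hcase | hcase
  · -- j < h
    refine ⟨j, ?_, j, ?_, ?_⟩
    · unfold Diff2At
      rw [splice_getD b s h hb, splice_getD b' s h hb', if_pos hcase, if_pos hcase]
      exact hd
    · unfold Diff2At
      rw [splice_getD b s h hb, splice_getD b' s h hb', if_pos hcase, if_pos hcase]
      exact hd
    · intro i hi
      rw [splice_getD b s h hb, splice_getD b' s h hb']
      by_cases h1 : i < h
      · rw [if_pos h1, if_pos h1]; exact hoff i hi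
      · by_cases h2 : i < h + s.length
        · rw [if_neg h1, if_neg h1, if_pos h2, if_pos h2]
        · rw [if_neg h1, if_neg h1, if_neg h2, if_neg h2]
          exact hoff (i + 1 - s.length) (by omega)
  · -- j > h
    have hdiff : Diff2At (splice b h s) (splice b' h s) (j + s.length - 1) := by
      unfold Diff2At
      rw [splice_getD b s h hb, splice_getD b' s h hb',
        if_neg (by omega), if_neg (by omega), if_neg (by omega), if_neg (by omega)]
      have : j + s.length - 1 + 1 - s.length = j := by omega
      rw [this]
      exact hd
    refine ⟨j + s.length - 1, hdiff, j + s.length - 1, hdiff, ?_⟩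
    intro i hi
    rw [splice_getD b s h hb, splice_getD b' s h hb']
    by_cases h1 : i < h
    · rw [if_pos h1, if_pos h1]; exact hoff i (by omega)
    · by_cases h2 : i < h + s.length
      · rw [if_neg h1, if_neg h1, if_pos h2, if_pos h2]
      · rw [if_neg h1, if_neg h1, if_neg h2, if_neg h2]
        exact hoff (i + 1 - s.length) (by omega)

/-! ### Extremal lemmas: bound and balance -/

lemma peel_bound (n h : ℕ) (F : Finset (List (Fin 4)))
    (hlen : ∀ v ∈ F, v.length = n + 1)
    (hP : ∀ v ∈ F, ∀ w ∈ F, v ≠ w → ∃ i, Diff2At v w i)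
    (hh : h ≤ n) (a b : Fin 4) (hab : a ≠ b)
    (hnd : ¬ (((a : ℕ)) = (b : ℕ) + 2 ∨ ((b : ℕ)) = (a : ℕ) + 2))
    (IH : ∀ G : Finset (List (Fin 4)), (∀ v ∈ G, v.length = n) →
      (∀ v ∈ G, ∀ w ∈ G, v ≠ w → ∃ i, Diff2At v w i) → G.card ≤ 2 ^ n) :
    (F.filter (fun v => v.getD h 0 = a)).card
      + (F.filter (fun v => v.getD h 0 = b)).card ≤ 2 ^ n := by
  classical
  set A : Finset (List (Fin 4)) :=
    F.filter (fun v => v.getD h 0 = a ∨ v.getD h 0 = b) with hA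
  have hAsub : ∀ u ∈ A, u ∈ F ∧ (u.getD h 0 = a ∨ u.getD h 0 = b) := by
    intro u hu; exact Finset.mem_filter.mp hu
  -- no Diff2At at coordinate h between members of A
  have hnoth : ∀ u ∈ A, ∀ u' ∈ A, ¬ Diff2At u u' h := by
    intro u hu u' hu' hd
    obtain ⟨-, hua⟩ := hAsub u hu
    obtain ⟨-, hua'⟩ := hAsub u' hu'
    unfold Diff2At at hd
    have h4a : ((a : ℕ)) < 4 := a.isLt
    have h4b : ((b : ℕ)) < 4 := b.isLt
    rcases hua with h1 | h1 <;> rcases hua' with h2 | h2 <;> rw [h1, h2] at hd <;> omega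
  -- same strings off h implies equal
  have hsame : ∀ u ∈ A, ∀ u' ∈ A, (∀ i, i ≠ h → u.getD i 0 = u'.getD i 0) → u = u' := by
    intro u hu u' hu' hag
    by_contra hne
    obtain ⟨i, hdi⟩ := hP u (hAsub u hu).1 u' (hAsub u' hu').1 hne
    rcases eq_or_ne i h with rfl | hih
    · exact hnoth u hu u' hu' hdi
    · unfold Diff2At at hdi
      rw [hag i hih] at hdi
      omega
  have hlt : ∀ u ∈ A, h < u.length := by
    intro u hu; rw [hlen u (hAsub u hu).1]; omega
  set e : List (Fin 4) → List (Fin 4) := fun u => splice u h [] with he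
  have egetD : ∀ u ∈ A, ∀ i, (e u).getD i 0 =
      if i < h then u.getD i 0 else u.getD (i + 1) 0 := by
    intro u hu i
    rw [he]
    rw [splice_getD u [] h (hlt u hu) i]
    by_cases h1 : i < h
    · simp [h1]
    · simp [h1]
  have hagree : ∀ u ∈ A, ∀ u' ∈ A, e u = e u' → ∀ i, i ≠ h → u.getD i 0 = u'.getD i 0 := by
    intro u hu u' hu' heq i hih
    rcases lt_or_gt_of_ne hih with hc | hc
    · have hgd : (e u).getD i 0 = (e u').getD i 0 := by rw [heq]
      rw [egetD u hu i, egetD u' hu' i, if_pos hc, if_pos hc] at hgd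
      exact hgd
    · have hgd : (e u).getD (i - 1) 0 = (e u').getD (i - 1) 0 := by rw [heq]
      rw [egetD u hu (i - 1), egetD u' hu' (i - 1), if_neg (by omega), if_neg (by omega)] at hgd
      have hi1 : i - 1 + 1 = i := by omega
      rwa [hi1] at hgd
  have hinj : Set.InjOn e ↑A := by
    intro u hu u' hu' heq
    exact hsame u hu u' hu' (hagree u hu u' hu' heq)
  set G := A.image e with hG
  have hGcard : G.card = A.card := Finset.card_image_of_injOn hinj
  have hGlen : ∀ x ∈ G, x.length = n := by
    intro x hx
    obtain ⟨u, hu, rfl⟩ := Finset.mem_image.mp hx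
    rw [he]
    rw [splice_length u [] h (hlt u hu), hlen u (hAsub u hu).1]
    simp
  have hGP : ∀ x ∈ G, ∀ y ∈ G, x ≠ y → ∃ i, Diff2At x y i := by
    intro x hx y hy hxy
    obtain ⟨u, hu, rfl⟩ := Finset.mem_image.mp hx
    obtain ⟨u', hu', rfl⟩ := Finset.mem_image.mp hy
    have hne : u ≠ u' := by rintro rfl; exact hxy rfl
    obtain ⟨i, hdi⟩ := hP u (hAsub u hu).1 u' (hAsub u' hu').1 hne
    have hih : i ≠ h := by
      rintro rfl; exact hnoth u hu u' hu' hdi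
    rcases lt_or_gt_of_ne hih with hc | hc
    · refine ⟨i, ?_⟩
      unfold Diff2At
      rw [egetD u hu i, egetD u' hu' i, if_pos hc, if_pos hc]
      exact hdi
    · refine ⟨i - 1, ?_⟩
      unfold Diff2At
      rw [egetD u hu (i - 1), egetD u' hu' (i - 1), if_neg (by omega), if_neg (by omega)]
      have hi1 : i - 1 + 1 = i := by omega
      rw [hi1]
      exact hdi
  have hcardA : A.card = (F.filter (fun v => v.getD h 0 = a)).card
      + (F.filter (fun v => v.getD h 0 = b)).card := by
    rw [hA, Finset.filter_or]
    rw [Finset.card_union_of_disjoint]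
    rw [Finset.disjoint_left]
    intro u hu hu'
    have h1 := (Finset.mem_filter.mp hu).2
    have h2 := (Finset.mem_filter.mp hu').2
    exact hab (h1 ▸ h2 ▸ rfl)
  calc (F.filter (fun v => v.getD h 0 = a)).card
      + (F.filter (fun v => v.getD h 0 = b)).card = A.card := hcardA.symm
    _ = G.card := hGcard.symm
    _ ≤ 2 ^ n := IH G hGlen hGP

lemma lemB : ∀ n (F : Finset (List (Fin 4))), (∀ v ∈ F, v.length = n) →
    (∀ v ∈ F, ∀ w ∈ F, v ≠ w → ∃ i, Diff2At v w i) → F.card ≤ 2 ^ n := by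
  intro n
  induction n with
  | zero =>
    intro F hlen hP
    have hsub : F ⊆ {[]} := by
      intro v hv
      have := hlen v hv
      rw [List.length_eq_zero_iff] at this
      simp [this]
    calc F.card ≤ ({[]} : Finset (List (Fin 4))).card := Finset.card_le_card hsub
      _ = 1 := Finset.card_singleton _
      _ ≤ 2 ^ 0 := by norm_num
  | succ n ih =>
    intro F hlen hP
    have h01 := peel_bound n 0 F hlen hP (by omega) 0 1 (by decide) (by decide) ih
    have h23 := peel_bound n 0 F hlen hP (by omega) 2 3 (by decide) (by decide) ih
    have hsum : F.card = ∑ c : Fin 4, (F.filter (fun v => v.getD 0 0 = c)).card :=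
      Finset.card_eq_sum_card_fiberwise (fun x _ => Finset.mem_univ _)
    rw [Fin.sum_univ_four] at hsum
    have hpow : 2 ^ (n + 1) = 2 ^ n + 2 ^ n := by ring
    omega

lemma balance {n : ℕ} {K : Finset (List (Fin 4))} (hU : IsUSOSet n K)
    {h : ℕ} (hh : h < n) (a : Fin 4) :
    (K.filter (fun v => v.getD h 0 = a)).card
      = (K.filter (fun v => v.getD h 0 = a + 2)).card := by
  obtain ⟨hlen, hcard, hP⟩ := hU
  obtain ⟨m, rfl⟩ : ∃ m, n = m + 1 := ⟨n - 1, by omega⟩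
  have hP' : ∀ v ∈ K, ∀ w ∈ K, v ≠ w → ∃ i, Diff2At v w i := by
    intro v hv w hw hne
    obtain ⟨i, -, hd⟩ := hP v hv w hw hne
    exact ⟨i, hd⟩
  have hIH := fun (G : Finset (List (Fin 4))) => lemB m G
  have hhm : h ≤ m := by omega
  have h01 := peel_bound m h K hlen hP' hhm 0 1 (by decide) (by decide) hIH
  have h12 := peel_bound m h K hlen hP' hhm 1 2 (by decide) (by decide) hIH
  have h23 := peel_bound m h K hlen hP' hhm 2 3 (by decide) (by decide) hIH
  have h30 := peel_bound m h K hlen hP' hhm 3 0 (by decide) (by decide) hIH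
  have hsum : K.card = ∑ c : Fin 4, (K.filter (fun v => v.getD h 0 = c)).card :=
    Finset.card_eq_sum_card_fiberwise (fun x _ => Finset.mem_univ _)
  rw [Fin.sum_univ_four, hcard] at hsum
  have hpow : 2 ^ (m + 1) = 2 ^ m + 2 ^ m := by ring
  fin_cases a
  · show (K.filter (fun v => v.getD h 0 = 0)).card = (K.filter (fun v => v.getD h 0 = (0 : Fin 4) + 2)).card
    rw [show ((0 : Fin 4) + 2) = 2 by decide]
    omega
  · show (K.filter (fun v => v.getD h 0 = 1)).card = (K.filter (fun v => v.getD h 0 = (1 : Fin 4) + 2)).card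
    rw [show ((1 : Fin 4) + 2) = 3 by decide]
    omega
  · show (K.filter (fun v => v.getD h 0 = 2)).card = (K.filter (fun v => v.getD h 0 = (2 : Fin 4) + 2)).card
    rw [show ((2 : Fin 4) + 2) = 0 by decide]
    omega
  · show (K.filter (fun v => v.getD h 0 = 3)).card = (K.filter (fun v => v.getD h 0 = (3 : Fin 4) + 2)).card
    rw [show ((3 : Fin 4) + 2) = 1 by decide]
    omega

theorem stmt7 (k d : ℕ) (K : Finset (List (Fin 4)))
    (hK : IsUSOSet k K) (hKf : HasFlippable K)
    (S : Fin 4 → Finset (List (Fin 4))) (hS : IsSimpleRule d S)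
    (hS02 : HasFlippable (S 0 ∪ S 2)) (hS13 : HasFlippable (S 1 ∪ S 3))
    (h : ℕ) (hh : h < k) :
    HasFlippable (rewriteSet S h K) := by
  classical
  obtain ⟨hKlen, hKcard, hKP⟩ := hK
  obtain ⟨v, hvK, w, hwK, hvw, j, hdj, hoffj⟩ := hKf
  obtain ⟨-, hU02, -, hU13⟩ := hS
  have hvlen : v.length = k := hKlen v hvK
  have hwlen : w.length = k := hKlen w hwK
  have hvh : h < v.length := by omega
  have hwh : h < w.length := by omega
  -- lengths of strings in the rule
  have hSlen : ∀ c : Fin 4, ∀ s ∈ S c, s.length = d := by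
    intro c s hs
    fin_cases c
    · exact hU02.1 s (Finset.mem_union_left _ hs)
    · exact hU13.1 s (Finset.mem_union_left _ hs)
    · exact hU02.1 s (Finset.mem_union_right _ hs)
    · exact hU13.1 s (Finset.mem_union_right _ hs)
  -- flippable pair in each class S c ∪ S (c+2)
  have hclass : ∀ c : Fin 4, ∃ s t m, s ∈ S c ∪ S (c + 2) ∧ t ∈ S c ∪ S (c + 2) ∧
      Diff2At s t m ∧ (∀ i, i ≠ m → s.getD i 0 = t.getD i 0) ∧
      s.length = d ∧ t.length = d ∧ m < d := by
    have key : ∀ (A B : Finset (List (Fin 4))), IsUSOSet d (A ∪ B) → HasFlippable (A ∪ B) →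
        ∃ s t m, s ∈ A ∪ B ∧ t ∈ A ∪ B ∧ Diff2At s t m ∧
          (∀ i, i ≠ m → s.getD i 0 = t.getD i 0) ∧ s.length = d ∧ t.length = d ∧ m < d := by
      intro A B hU hFl
      obtain ⟨s, hs, t, ht, hst, m, hdm, hoffm⟩ := hFl
      have hsl := hU.1 s hs
      have htl := hU.1 t ht
      exact ⟨s, t, m, hs, ht, hdm, hoffm, hsl, htl, diff2_lt hsl htl hdm⟩
    intro c
    fin_cases c
    · exact key (S 0) (S 2) hU02 hS02
    · exact key (S 1) (S 3) hU13 hS13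
    · have hU20 : IsUSOSet d (S 2 ∪ S 0) := by rwa [Finset.union_comm]
      have hF20 : HasFlippable (S 2 ∪ S 0) := by rwa [Finset.union_comm]
      exact key (S 2) (S 0) hU20 hF20
    · have hU31 : IsUSOSet d (S 3 ∪ S 1) := by rwa [Finset.union_comm]
      have hF31 : HasFlippable (S 3 ∪ S 1) := by rwa [Finset.union_comm]
      exact key (S 3) (S 1) hU31 hF31
  -- d ≥ 1
  have hd1 : 1 ≤ d := by
    obtain ⟨s, t, m, -, -, -, -, -, -, hm⟩ := hclass 0
    omega
  by_cases hjh : j = h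
  · -- the K-flip is at coordinate h
    subst hjh
    have hwv : w.getD j 0 = v.getD j 0 + 2 := by
      have h1 : ((v.getD j 0 : Fin 4) : ℕ) < 4 := (v.getD j 0).isLt
      have h2 : ((w.getD j 0 : Fin 4) : ℕ) < 4 := (w.getD j 0).isLt
      apply Fin.ext
      rw [Fin.val_add]
      rcases hdj with hc | hc <;> omega
    obtain ⟨s, t, m, hs, ht, hdm, hoffm, hsl, htl, hm⟩ := hclass (v.getD j 0)
    rw [← hwv] at hs ht
    have pick : ∀ u ∈ S (v.getD j 0) ∪ S (w.getD j 0), ∃ b, b ∈ K ∧ u ∈ S (b.getD j 0) ∧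
        (∀ i, i ≠ j → b.getD i 0 = v.getD i 0) ∧ b.length = k := by
      intro u hu
      rcases Finset.mem_union.mp hu with h' | h'
      · exact ⟨v, hvK, h', fun i _ => rfl, hvlen⟩
      · exact ⟨w, hwK, h', fun i hi => (hoffj i hi).symm, hwlen⟩
    obtain ⟨bs, hbsK, hbss, hbsoff, hbsl⟩ := pick s hs
    obtain ⟨bt, hbtK, hbtt, hbtoff, hbtl⟩ := pick t ht
    have hres := flip_spliceA (b := bs) (b' := bt) (s := s) (t := t) (h := j) (m := m)
      (by omega) (by omega) (by omega) (by omega) (by omega)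
      (fun i hi => (hbsoff i hi).trans (hbtoff i hi).symm) hdm hoffm
    exact ⟨splice bs j s, mem_rewrite hbsK hbss, splice bt j t, mem_rewrite hbtK hbtt,
      ne_of_diff2 hres.1, hres.2⟩
  · -- the K-flip is at coordinate j ≠ h
    have hjk : j < k := diff2_lt hvlen hwlen hdj
    have hwvh : w.getD h 0 = v.getD h 0 := (hoffj h (Ne.symm hjh)).symm
    by_cases hSc : (S (v.getD h 0)).Nonempty
    · obtain ⟨s, hs⟩ := hSc
      have hsl : s.length = d := hSlen _ s hs
      obtain ⟨p, hdp, hfp⟩ := flip_spliceB (b := v) (b' := w) (s := s) (h := h) (j := j)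
        hvh hwh (by omega) (by omega) hjh (by omega) hdj hoffj
      refine ⟨splice v h s, mem_rewrite hvK hs, splice w h s, mem_rewrite hwK ?_,
        ne_of_diff2 hdp, hfp⟩
      rw [hwvh]
      exact hs
    · -- S at value c is empty; use the balance lemma to find a partner vertex
      have hScempty : S (v.getD h 0) = ∅ := Finset.not_nonempty_iff_eq_empty.mp hSc
      have hpos : 0 < (K.filter (fun u => u.getD h 0 = v.getD h 0)).card := by
        apply Finset.card_pos.mpr
        exact ⟨v, Finset.mem_filter.mpr ⟨hvK, rfl⟩⟩
      have hbal := balance ⟨hKlen, hKcard, hKP⟩ hh (v.getD h 0)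
      rw [hbal] at hpos
      obtain ⟨u, hu⟩ := Finset.card_pos.mp hpos
      obtain ⟨huK, huh⟩ := Finset.mem_filter.mp hu
      obtain ⟨s, t, m, hs, ht, hdm, hoffm, hsl, htl, hm⟩ := hclass (v.getD h 0)
      have hs' : s ∈ S (u.getD h 0) := by
        rw [huh]
        rcases Finset.mem_union.mp hs with h' | h'
        · rw [hScempty] at h'; exact absurd h' (Finset.notMem_empty _)
        · exact h'
      have ht' : t ∈ S (u.getD h 0) := by
        rw [huh]
        rcases Finset.mem_union.mp ht with h' | h'
        · rw [hScempty] at h'; exact absurd h' (Finset.notMem_empty _)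
        · exact h'
      have hulen : u.length = k := hKlen u huK
      have hres := flip_spliceA (b := u) (b' := u) (s := s) (t := t) (h := h) (m := m)
        (by omega) (by omega) rfl (by omega) (by omega)
        (fun i _ => rfl) hdm hoffm
      exact ⟨splice u h s, mem_rewrite huK hs', splice u h t, mem_rewrite huK ht',
        ne_of_diff2 hres.1, hres.2⟩
end

section
/- In any generalized rewriting rule, for all labels j, j' ∈ [i] and each m ∈ {0,1,2,3}, the sets S^(m)_j and S^(m)_{j'} contain the same vertices of the unoriented d-cube, i.e., { F(s) : s ∈ S^(m)_j } = { F(s') : s' ∈ S^(m)_{j'} }, where F(v)_ℓ = ⌊v_ℓ/2⌋. -/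
/-- A generalized rewriting rule with labels in `Fin i` and target dimension `d`. -/
def IsGenRule (d i : ℕ) (S : Fin 4 → Fin i → Finset (List (Fin 4))) : Prop :=
  (∀ j j' : Fin i, Disjoint (S 0 j) (S 2 j') ∧ IsUSOSet d (S 0 j ∪ S 2 j')) ∧
    (∀ j j' : Fin i, Disjoint (S 1 j) (S 3 j') ∧ IsUSOSet d (S 1 j ∪ S 3 j'))

/-- Applying a generalized rewriting rule at (0-indexed) dimension `h` to the
labelled USO `(K, L)`:
`T_h(K, L) = ⋃_{v ∈ K} { v₁…v_{h-1} t v_{h+1}…v_k : t ∈ S^(v_h)_{L(v)} }`. -/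
def genRewrite {i : ℕ} (S : Fin 4 → Fin i → Finset (List (Fin 4)))
    (L : List (Fin 4) → Fin i) (h : ℕ) (K : Finset (List (Fin 4))) :
    Finset (List (Fin 4)) :=
  K.biUnion fun v => (S (v.getD h 0) (L v)).image (splice v h)

/-- `F` maps a string over `{0,1,2,3}` to the corresponding cube vertex:
`0,1 ↦ 0` and `2,3 ↦ 1` componentwise. -/
def Fstr (s : List (Fin 4)) : List Bool :=
  s.map fun x => decide (2 ≤ (x : ℕ))


lemma Fstr_eq (v : List (Fin 4)) :
    Fstr v = v.map (fun x : Fin 4 => decide (2 ≤ (x : ℕ))) := by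
  induction v with
  | nil => rfl
  | cons a t ih => simpa [Fstr] using ih

lemma Fstr_length (v : List (Fin 4)) : (Fstr v).length = v.length := by
  rw [Fstr_eq, List.length_map]

/-- The set of all Boolean strings of length `d`. -/
def allV (d : ℕ) : Finset (List Bool) :=
  (Finset.univ : Finset (List.Vector Bool d)).image List.Vector.toList

lemma mem_allV {d : ℕ} {l : List Bool} (h : l.length = d) : l ∈ allV d :=
  Finset.mem_image.2 ⟨⟨l, h⟩, Finset.mem_univ _, rfl⟩

lemma card_allV (d : ℕ) : (allV d).card = 2 ^ d := by
  rw [allV, Finset.card_image_of_injective _ (fun a b hab => List.Vector.eq a b hab)]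
  simp

lemma Fstr_getD (v : List (Fin 4)) (i : ℕ) (h : i < v.length) :
    (Fstr v).getD i false = decide (2 ≤ ((v.getD i 0 : Fin 4) : ℕ)) := by
  have hl : i < (Fstr v).length := by rw [Fstr_length]; exact h
  rw [List.getD_eq_getElem _ _ hl, List.getD_eq_getElem _ _ h]
  simp only [Fstr_eq, List.getElem_map]

lemma Fstr_ne (x y : List (Fin 4)) (i : ℕ) (hx : i < x.length) (hy : i < y.length)
    (h : Diff2At x y i) : Fstr x ≠ Fstr y := by
  intro he
  have h1 := Fstr_getD x i hx
  have h2 := Fstr_getD y i hy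
  rw [he, h2] at h1
  have hxi := (x.getD i 0).isLt
  have hyi := (y.getD i 0).isLt
  rcases h with h | h <;> rw [decide_eq_decide] at h1 <;> omega

lemma Fstr_injOn {d : ℕ} {K : Finset (List (Fin 4))} (hK : IsUSOSet d K) :
    Set.InjOn Fstr K := by
  intro x hx y hy he
  by_contra hne
  obtain ⟨ι, hι, hdiff⟩ := hK.2.2 x hx y hy hne
  exact Fstr_ne x y ι (by rw [hK.1 x hx]; exact hι) (by rw [hK.1 y hy]; exact hι) hdiff he

/-- Key lemma: the image of `A` under `Fstr` is determined by `B`. -/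
lemma key_compl {d : ℕ} {A B : Finset (List (Fin 4))} (hd : Disjoint A B)
    (hU : IsUSOSet d (A ∪ B)) : A.image Fstr = allV d \ B.image Fstr := by
  have hinj := Fstr_injOn hU
  have hUV : (A ∪ B).image Fstr = allV d := by
    apply Finset.eq_of_subset_of_card_le
    · intro l hl
      obtain ⟨v, hv, rfl⟩ := Finset.mem_image.1 hl
      exact mem_allV (by rw [Fstr_length]; exact hU.1 v hv)
    · rw [card_allV, Finset.card_image_of_injOn hinj, hU.2.1]
  have hdisj : Disjoint (A.image Fstr) (B.image Fstr) := by
    rw [Finset.disjoint_left]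
    intro l hlA hlB
    obtain ⟨a, ha, rfl⟩ := Finset.mem_image.1 hlA
    obtain ⟨b, hb, hba⟩ := Finset.mem_image.1 hlB
    have : b = a := hinj (Finset.mem_union_right _ hb) (Finset.mem_union_left _ ha) hba
    subst this
    exact Finset.disjoint_left.1 hd ha hb
  rw [← hUV, Finset.image_union, Finset.union_sdiff_cancel_right hdisj]

/-- In a generalized rewriting rule, the sets `S^(m)_j` and `S^(m)_{j'}`
contain the same vertices of the unoriented cube. -/
theorem stmt10 (d i : ℕ) (S : Fin 4 → Fin i → Finset (List (Fin 4)))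
    (hS : IsGenRule d i S) (m : Fin 4) (j j' : Fin i) :
    (S m j).image Fstr = (S m j').image Fstr := by
  obtain ⟨h1, h2⟩ := hS
  fin_cases m
  · exact (key_compl (h1 j j).1 (h1 j j).2).trans (key_compl (h1 j' j).1 (h1 j' j).2).symm
  · exact (key_compl (h2 j j).1 (h2 j j).2).trans (key_compl (h2 j' j).1 (h2 j' j).2).symm
  · exact (key_compl (h1 j j).1.symm (by rw [Finset.union_comm]; exact (h1 j j).2)).trans
      (key_compl (h1 j j').1.symm (by rw [Finset.union_comm]; exact (h1 j j').2)).symm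
  · exact (key_compl (h2 j j).1.symm (by rw [Finset.union_comm]; exact (h2 j j).2)).trans
      (key_compl (h2 j j').1.symm (by rw [Finset.union_comm]; exact (h2 j j').2)).symm
end

section
/- Let K be an n-dimensional USO given as strings in {0,1,2,3}^n, and for m ∈ {0,1,2,3} let V_m := { v_1…v_{n-1} : v ∈ K, v_n = m }. Then each of the four unions V_3 ∪ V_2, V_1 ∪ V_0, V_3 ∪ V_0, and V_1 ∪ V_2 is a disjoint union representing an (n-1)-dimensional USO. -/
/-- `V_m`: the set of prefixes (of length `n-1`) of the strings of `K`
whose last coordinate is `m`. -/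
def Vm (n : ℕ) (K : Finset (List (Fin 4))) (m : Fin 4) : Finset (List (Fin 4)) :=
  (K.filter fun v => v.getD (n - 1) 0 = m).image fun v => v.take (n - 1)

lemma getD_take_lt (v : List (Fin 4)) (d i : ℕ) (h : i < d) :
    (v.take d).getD i 0 = v.getD i 0 := by
  simp [List.getD, List.getElem?_take, h]

/-- Last coordinates `a`, `b` not differing by 2: `take` is injective. -/
lemma take_injOn (d : ℕ) (F : Finset (List (Fin 4)))
    (hdiff : ∀ v ∈ F, ∀ w ∈ F, v ≠ w → ∃ i : ℕ, i < d + 1 ∧ Diff2At v w i)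
    (a b : Fin 4) (hab : ¬((a:ℕ) = (b:ℕ) + 2 ∨ (b:ℕ) = (a:ℕ) + 2)) :
    ∀ v ∈ F.filter (fun v => v.getD d 0 = a ∨ v.getD d 0 = b),
    ∀ w ∈ F.filter (fun v => v.getD d 0 = a ∨ v.getD d 0 = b),
      v.take d = w.take d → v = w := by
  intro v hv w hw ht
  simp only [Finset.mem_filter] at hv hw
  by_contra hne
  obtain ⟨i, hi, hd2⟩ := hdiff v hv.1 w hw.1 hne
  simp only [Diff2At] at hd2
  rcases Nat.lt_or_ge i d with h | h
  · have := congrArg (fun l => l.getD i 0) ht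
    simp only [getD_take_lt _ _ _ h] at this
    rw [this] at hd2
    rcases hd2 with h2 | h2 <;> omega
  · have hieq : i = d := by omega
    subst hieq
    rcases hv.2 with h1 | h1 <;> rcases hw.2 with h2 | h2 <;>
      rw [h1, h2] at hd2 <;> rcases hd2 with h3 | h3 <;> omega

/-- Distinct prefixes still pairwise differ by 2 in some earlier coordinate. -/
lemma prefix_diff (d : ℕ) (F : Finset (List (Fin 4)))
    (hdiff : ∀ v ∈ F, ∀ w ∈ F, v ≠ w → ∃ i : ℕ, i < d + 1 ∧ Diff2At v w i)
    (a b : Fin 4) (hab : ¬((a:ℕ) = (b:ℕ) + 2 ∨ (b:ℕ) = (a:ℕ) + 2)) :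
    ∀ p ∈ (F.filter (fun v => v.getD d 0 = a ∨ v.getD d 0 = b)).image (fun v => v.take d),
    ∀ q ∈ (F.filter (fun v => v.getD d 0 = a ∨ v.getD d 0 = b)).image (fun v => v.take d),
      p ≠ q → ∃ i : ℕ, i < d ∧ Diff2At p q i := by
  intro p hp q hq hpq
  simp only [Finset.mem_image, Finset.mem_filter] at hp hq
  obtain ⟨v, ⟨hvF, hva⟩, rfl⟩ := hp
  obtain ⟨w, ⟨hwF, hwa⟩, rfl⟩ := hq
  have hne : v ≠ w := fun h => hpq (by rw [h])
  obtain ⟨i, hi, hd2⟩ := hdiff v hvF w hwF hne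
  simp only [Diff2At] at hd2
  have hid : i ≠ d := by
    rintro rfl
    rcases hva with h1 | h1 <;> rcases hwa with h2 | h2 <;>
      rw [h1, h2] at hd2 <;> rcases hd2 with h3 | h3 <;> omega
  have hid' : i < d := by omega
  refine ⟨i, hid', ?_⟩
  simp only [Diff2At]
  rw [getD_take_lt _ _ _ hid', getD_take_lt _ _ _ hid']
  exact hd2

lemma take_len (d : ℕ) (F : Finset (List (Fin 4)))
    (hlen : ∀ v ∈ F, v.length = d + 1) (P : List (Fin 4) → Prop) [DecidablePred P] :
    ∀ p ∈ (F.filter P).image (fun v => v.take d), p.length = d := by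
  intro p hp
  simp only [Finset.mem_image, Finset.mem_filter] at hp
  obtain ⟨v, ⟨hvF, _⟩, rfl⟩ := hp
  simp [List.length_take, hlen v hvF]

/-- Any pairwise-differ-by-2 family of length-`d` strings has at most `2^d` elements. -/
lemma card_le_pow : ∀ (d : ℕ) (F : Finset (List (Fin 4))),
    (∀ v ∈ F, v.length = d) →
    (∀ v ∈ F, ∀ w ∈ F, v ≠ w → ∃ i : ℕ, i < d ∧ Diff2At v w i) →
    F.card ≤ 2 ^ d := by
  intro d
  induction d with
  | zero =>
    intro F hlen _
    have hsub : F ⊆ {[]} := by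
      intro v hv
      simp [List.eq_nil_of_length_eq_zero (hlen v hv)]
    calc F.card ≤ ({[]} : Finset (List (Fin 4))).card := Finset.card_le_card hsub
      _ = 1 := Finset.card_singleton _
  | succ d ih =>
    intro F hlen hdiff
    have key : ∀ a b : Fin 4, ¬((a:ℕ) = (b:ℕ) + 2 ∨ (b:ℕ) = (a:ℕ) + 2) →
        (F.filter (fun v => v.getD d 0 = a ∨ v.getD d 0 = b)).card ≤ 2 ^ d := by
      intro a b hab
      rw [← Finset.card_image_of_injOn (take_injOn d F hdiff a b hab)]
      exact ih _ (take_len d F hlen _) (prefix_diff d F hdiff a b hab)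
    have hsplit : (F.filter (fun v => v.getD d 0 = 0 ∨ v.getD d 0 = 3)).card +
        (F.filter (fun v => ¬(v.getD d 0 = 0 ∨ v.getD d 0 = 3))).card = F.card :=
      Finset.card_filter_add_card_filter_not _
    have hneg : F.filter (fun v => ¬(v.getD d 0 = 0 ∨ v.getD d 0 = 3)) =
        F.filter (fun v => v.getD d 0 = 1 ∨ v.getD d 0 = 2) := by
      apply Finset.filter_congr
      intro v _
      have h4 : ∀ x : Fin 4, ¬(x = 0 ∨ x = 3) ↔ (x = 1 ∨ x = 2) := by decide
      exact h4 _
    rw [hneg] at hsplit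
    have h1 := key 0 3 (by decide)
    have h2 := key 1 2 (by decide)
    omega

/-- The four unions `V₃ ∪ V₂`, `V₁ ∪ V₀`, `V₃ ∪ V₀`, `V₁ ∪ V₂` are disjoint
unions representing `(n-1)`-dimensional USOs. -/
theorem stmt12 (n : ℕ) (hn : 1 ≤ n) (K : Finset (List (Fin 4)))
    (hK : IsUSOSet n K) :
    (Disjoint (Vm n K 3) (Vm n K 2) ∧ IsUSOSet (n - 1) (Vm n K 3 ∪ Vm n K 2)) ∧
      (Disjoint (Vm n K 1) (Vm n K 0) ∧ IsUSOSet (n - 1) (Vm n K 1 ∪ Vm n K 0)) ∧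
      (Disjoint (Vm n K 3) (Vm n K 0) ∧ IsUSOSet (n - 1) (Vm n K 3 ∪ Vm n K 0)) ∧
      (Disjoint (Vm n K 1) (Vm n K 2) ∧ IsUSOSet (n - 1) (Vm n K 1 ∪ Vm n K 2)) := by
  obtain ⟨d, rfl⟩ : ∃ d, n = d + 1 := ⟨n - 1, by omega⟩
  obtain ⟨hKlen, hKcard, hKdiff⟩ := hK
  have hVm : ∀ m : Fin 4, Vm (d+1) K m =
      (K.filter fun v => v.getD d 0 = m).image (fun v => v.take d) := fun m => rfl
  have hunion : ∀ a b : Fin 4, Vm (d+1) K a ∪ Vm (d+1) K b =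
      (K.filter fun v => v.getD d 0 = a ∨ v.getD d 0 = b).image (fun v => v.take d) := by
    intro a b
    rw [hVm, hVm, Finset.filter_or, Finset.image_union]
  -- disjointness
  have hdisj : ∀ a b : Fin 4, a ≠ b → ¬((a:ℕ) = (b:ℕ) + 2 ∨ (b:ℕ) = (a:ℕ) + 2) →
      Disjoint (Vm (d+1) K a) (Vm (d+1) K b) := by
    intro a b hne hab
    rw [Finset.disjoint_left]
    intro p hpa hpb
    rw [hVm] at hpa hpb
    simp only [Finset.mem_image, Finset.mem_filter] at hpa hpb
    obtain ⟨v, ⟨hvK, hva⟩, rfl⟩ := hpa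
    obtain ⟨w, ⟨hwK, hwb⟩, hqw⟩ := hpb
    have hvw : v = w := take_injOn d K hKdiff a b hab
      v (Finset.mem_filter.2 ⟨hvK, Or.inl hva⟩)
      w (Finset.mem_filter.2 ⟨hwK, Or.inr hwb⟩) hqw.symm
    subst hvw
    exact hne (hva ▸ hwb ▸ rfl)
  -- cardinalities of the filtered pieces
  have hcardeq : ∀ a b : Fin 4, ¬((a:ℕ) = (b:ℕ) + 2 ∨ (b:ℕ) = (a:ℕ) + 2) →
      (Vm (d+1) K a ∪ Vm (d+1) K b).card =
        (K.filter fun v => v.getD d 0 = a ∨ v.getD d 0 = b).card := by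
    intro a b hab
    rw [hunion]
    exact Finset.card_image_of_injOn (take_injOn d K hKdiff a b hab)
  have hle : ∀ a b : Fin 4, ¬((a:ℕ) = (b:ℕ) + 2 ∨ (b:ℕ) = (a:ℕ) + 2) →
      (Vm (d+1) K a ∪ Vm (d+1) K b).card ≤ 2 ^ d := by
    intro a b hab
    rw [hunion]
    exact card_le_pow d _ (take_len d K hKlen _) (prefix_diff d K hKdiff a b hab)
  have hsplit1 : (K.filter (fun v => v.getD d 0 = 3 ∨ v.getD d 0 = 2)).card +
      (K.filter (fun v => v.getD d 0 = 1 ∨ v.getD d 0 = 0)).card = K.card := by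
    have h := Finset.card_filter_add_card_filter_not
      (s := K) (fun v => v.getD d 0 = 3 ∨ v.getD d 0 = 2)
    have hneg : K.filter (fun v => ¬(v.getD d 0 = 3 ∨ v.getD d 0 = 2)) =
        K.filter (fun v => v.getD d 0 = 1 ∨ v.getD d 0 = 0) := by
      apply Finset.filter_congr
      intro v _
      have h4 : ∀ x : Fin 4, ¬(x = 3 ∨ x = 2) ↔ (x = 1 ∨ x = 0) := by decide
      exact h4 _
    rwa [hneg] at h
  have hsplit2 : (K.filter (fun v => v.getD d 0 = 3 ∨ v.getD d 0 = 0)).card +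
      (K.filter (fun v => v.getD d 0 = 1 ∨ v.getD d 0 = 2)).card = K.card := by
    have h := Finset.card_filter_add_card_filter_not
      (s := K) (fun v => v.getD d 0 = 3 ∨ v.getD d 0 = 0)
    have hneg : K.filter (fun v => ¬(v.getD d 0 = 3 ∨ v.getD d 0 = 0)) =
        K.filter (fun v => v.getD d 0 = 1 ∨ v.getD d 0 = 2) := by
      apply Finset.filter_congr
      intro v _
      have h4 : ∀ x : Fin 4, ¬(x = 3 ∨ x = 0) ↔ (x = 1 ∨ x = 2) := by decide
      exact h4 _
    rwa [hneg] at h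
  have huso : ∀ a b : Fin 4, ¬((a:ℕ) = (b:ℕ) + 2 ∨ (b:ℕ) = (a:ℕ) + 2) →
      (Vm (d+1) K a ∪ Vm (d+1) K b).card = 2 ^ d →
      IsUSOSet (d + 1 - 1) (Vm (d+1) K a ∪ Vm (d+1) K b) := by
    intro a b hab hc
    refine ⟨?_, ?_, ?_⟩
    · rw [hunion]
      exact take_len d K hKlen _
    · exact hc
    · rw [hunion]
      exact prefix_diff d K hKdiff a b hab
  have h32 := hcardeq 3 2 (by decide)
  have h10 := hcardeq 1 0 (by decide)
  have h30 := hcardeq 3 0 (by decide)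
  have h12 := hcardeq 1 2 (by decide)
  have l32 := hle 3 2 (by decide)
  have l10 := hle 1 0 (by decide)
  have l30 := hle 3 0 (by decide)
  have l12 := hle 1 2 (by decide)
  have hpow : 2 ^ (d + 1) = 2 ^ d + 2 ^ d := by ring
  rw [hKcard, hpow] at hsplit1 hsplit2
  refine ⟨⟨hdisj 3 2 (by decide) (by decide), huso 3 2 (by decide) (by omega)⟩,
    ⟨hdisj 1 0 (by decide) (by decide), huso 1 0 (by decide) (by omega)⟩,
    ⟨hdisj 3 0 (by decide) (by decide), huso 3 0 (by decide) (by omega)⟩,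
    ⟨hdisj 1 2 (by decide) (by decide), huso 1 2 (by decide) (by omega)⟩⟩
end
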